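/- For a core-language algorithm that is syntactically safe and satisfies Assumption (A): a ∈ fire_1(bias(θ), ψ̄) if and only if θ < thr̄, and b ∈ fire_1(bias(θ), ψ̄) if and only if θ > 1 − thr̄, where ψ̄ is the global predicate and thr̄ = max(1 − thr_u^1, 1 − thr_m^{1,k}/2) is the border threshold. -/

import Mathlib

open Classical

namespace HO

/-! ### Values

`none` is the undefined value `?`; defined values are natural numbers, where
`some 0` plays the role of `a` and `some 1` the role of `b` (so `a < b`). -/

abbrev Val := Option ℕ

def aVal : ℕ := 0
def bVal : ℕ := 1

/-! ### Operations -/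

inductive Op where
  | min : Op
  | smor : Op

/-- Minimum of a multiset of defined values (`none` if the multiset is empty). -/
noncomputable def msMin (S : Multiset ℕ) : Option ℕ :=
  if h : S.toFinset.Nonempty then some (S.toFinset.min' h) else none

/-- Smallest most frequent value of a multiset (`none` if the multiset is empty). -/
noncomputable def msSmor (S : Multiset ℕ) : Option ℕ :=
  if h : (S.toFinset.filter fun v => ∀ w ∈ S.toFinset, S.count w ≤ S.count v).Nonempty
  then some ((S.toFinset.filter fun v => ∀ w ∈ S.toFinset, S.count w ≤ S.count v).min' h)
  else none

noncomputable def Op.apply : Op → Multiset ℕ → Option ℕ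
  | Op.min, S => msMin S
  | Op.smor, S => msSmor S

/-! ### Rounds

A round consists of at most one `uni` instruction followed by a list of `mult`
instructions with non-increasing thresholds, all thresholds lying in `[0,1)`. -/

structure Round where
  uniThr : Option ℝ
  mults : List (ℝ × Op)
  wfU : ∀ t ∈ uniThr, 0 ≤ t ∧ t < 1
  wfM : ∀ q ∈ mults, 0 ≤ q.1 ∧ q.1 < 1
  sorted : (mults.map Prod.fst).Chain' (· ≥ ·)

def Round.hasUni (R : Round) : Prop := R.uniThr.isSome = true
def Round.hasMult (R : Round) : Prop := R.mults ≠ []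

/-- `thr_u^i`: the threshold of the uni instruction, `-1` if absent. -/
noncomputable def Round.thrU (R : Round) : ℝ := R.uniThr.getD (-1)

noncomputable def minThr : List ℝ → ℝ
  | [] => -1
  | [t] => t
  | t :: ts => min t (minThr ts)

/-- `thr_m^{i,k}`: the smallest threshold of a mult instruction, `-1` if absent. -/
noncomputable def Round.thrM (R : Round) : ℝ := minThr (R.mults.map Prod.fst)

/-- Result of the first applicable `mult` instruction. -/
noncomputable def firstMult (n : ℕ) (S : Multiset ℕ) : List (ℝ × Op) → Option ℕ
  | [] => none
  | (t, op) :: rest =>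
      if 1 < S.toFinset.card ∧ t * n < (S.card : ℝ) then op.apply S
      else firstMult n S rest

/-- `update_i(H)`: the result of the first instruction of the round whose condition
is satisfied by `H − {?}`, and `?` (i.e. `none`) if no condition applies. -/
noncomputable def Round.update (R : Round) (n : ℕ) (H : Multiset Val) : Option ℕ :=
  if ∃ t ∈ R.uniThr,
      (H.filterMap id).toFinset.card = 1 ∧ t * n < ((H.filterMap id).card : ℝ)
  then msMin (H.filterMap id)
  else firstMult n (H.filterMap id) R.mults

/-! ### Communication predicates for a round -/

/-- A conjunction of atomic communication predicates for one round: possibly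
`φ_=` (field `eq`) and possibly `φ_thr` (field `thr`, with `0 ≤ thr < 1`). -/
structure RoundPred where
  eq : Bool
  thr : Option ℝ
  wf : ∀ t ∈ thr, 0 ≤ t ∧ t < 1

/-- `thr_i(ψ)`: the threshold appearing in the predicate, `-1` if absent. -/
noncomputable def RoundPred.thrVal (φ : RoundPred) : ℝ := φ.thr.getD (-1)

def RoundPred.isEqualizer (φ : RoundPred) : Prop := φ.eq = true

/-- Satisfaction of a round predicate by a tuple of heard-of multisets. -/
def RoundPred.sat {α : Type} (φ : RoundPred) (n : ℕ) (Hs : Fin n → Multiset α) : Prop :=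
  (φ.eq = true → ∀ p q, Hs p = Hs q) ∧
  ∀ t ∈ φ.thr, ∀ p, t * n < ((Hs p).card : ℝ)

/-- Logical implication between round predicates. -/
def RoundPred.implies (φ φ' : RoundPred) : Prop :=
  ∀ (α : Type) (n : ℕ) (Hs : Fin n → Multiset α), φ.sat n Hs → φ'.sat n Hs

/-! ### Tuples of values -/

/-- The multiset of values of a tuple. -/
def msetOf {n : ℕ} (f : Fin n → Val) : Multiset Val := Finset.univ.val.map f

def soloB (n : ℕ) : Fin n → Val := fun _ => some bVal
def soloA (n : ℕ) : Fin n → Val := fun _ => some aVal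
def soloQ (n : ℕ) : Fin n → Val := fun _ => none

/-- `bias(θ)`: a tuple over `{a,b}` with `θ·n` entries equal to `b`. -/
def isBias {n : ℕ} (θ : ℝ) (f : Fin n → Val) : Prop :=
  (∀ p, f p = some aVal ∨ f p = some bVal) ∧
  ((Finset.univ.filter fun p => f p = some bVal).card : ℝ) = θ * n

/-- `spread = bias(1/2)`. -/
def isSpread {n : ℕ} (f : Fin n → Val) : Prop := isBias (1/2) f

/-- `bias^?(θ)`: a tuple over `{?,b}` with `θ·n` entries equal to `b`. -/
def isBiasQ {n : ℕ} (θ : ℝ) (f : Fin n → Val) : Prop :=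
  (∀ p, f p = none ∨ f p = some bVal) ∧
  ((Finset.univ.filter fun p => f p = some bVal).card : ℝ) = θ * n

/-- `bias_a^?(θ)`: a tuple over `{?,a}` with `θ·n` entries equal to `a`. -/
def isBiasQa {n : ℕ} (θ : ℝ) (f : Fin n → Val) : Prop :=
  (∀ p, f p = none ∨ f p = some aVal) ∧
  ((Finset.univ.filter fun p => f p = some aVal).card : ℝ) = θ * n

/-! ### Round transitions -/

/-- Round transition `f →[φ]_i f'`: every process receives a sub-multiset of the
multiset of sent values, the tuple of heard-of multisets jointly satisfies `φ`,
and every process updates its variable accordingly. -/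
def roundTrans (R : Round) (φ : RoundPred) {n : ℕ} (f f' : Fin n → Val) : Prop :=
  ∃ Hs : Fin n → Multiset Val,
    (∀ p, Hs p ≤ msetOf f) ∧ φ.sat n Hs ∧ ∀ p, f' p = R.update n (Hs p)

/-- `d ∈ fire_i(f,φ)`. -/
def fire (R : Round) (φ : RoundPred) {n : ℕ} (f : Fin n → Val) (d : Val) : Prop :=
  ∃ f' : Fin n → Val, roundTrans R φ f f' ∧ ∃ p, f' p = d

/-! ### Algorithms -/

/-- An algorithm of the core language: rounds `1,…,r` (`r ≥ 2`), with a designated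
input-update round `ir` (`1 ≤ ir < r`). -/
structure Algo where
  r : ℕ
  rounds : ℕ → Round
  ir : ℕ
  two_le_r : 2 ≤ r
  one_le_ir : 1 ≤ ir
  ir_lt_r : ir < r

noncomputable def Algo.thrU (A : Algo) (i : ℕ) : ℝ := (A.rounds i).thrU
noncomputable def Algo.thrM (A : Algo) (i : ℕ) : ℝ := (A.rounds i).thrM
def Algo.hasUni (A : Algo) (i : ℕ) : Prop := (A.rounds i).hasUni
def Algo.hasMult (A : Algo) (i : ℕ) : Prop := (A.rounds i).hasMult

/-- A phase predicate: a conjunction of atomic predicates for every round. -/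
abbrev PhasePred := ℕ → RoundPred

/-- Phase transition `(f,d) →ψ (f',d')`. -/
def phaseTrans (A : Algo) (ψ : PhasePred) {n : ℕ} (f d f' d' : Fin n → Val) : Prop :=
  ∃ g : ℕ → Fin n → Val,
    g 0 = f ∧
    (∀ i, 1 ≤ i → i ≤ A.r → roundTrans (A.rounds i) (ψ i) (g (i - 1)) (g i)) ∧
    (∀ p, f' p = if g A.ir p = none then f p else g A.ir p) ∧
    (∀ p, d' p = if d p = none then g A.r p else d p)

/-- A chain of round transitions for rounds `k,…,l`. -/
def roundChain (A : Algo) (ψ : PhasePred) (k l : ℕ) {n : ℕ} (f f' : Fin n → Val) : Prop :=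
  ∃ g : ℕ → Fin n → Val,
    g (k - 1) = f ∧ g l = f' ∧
    ∀ i, k ≤ i → i ≤ l → roundTrans (A.rounds i) (ψ i) (g (i - 1)) (g i)

/-! ### Syntactic notions -/

/-- Round `i` is preserving w.r.t. `ψ`. -/
def Algo.preserving (A : Algo) (ψ : PhasePred) (i : ℕ) : Prop :=
  ¬ A.hasUni i ∨ ¬ A.hasMult i ∨ (ψ i).thrVal < max (A.thrU i) (A.thrM i)

/-- Round `i` is solo-safe w.r.t. `ψ`. -/
def Algo.soloSafe (A : Algo) (ψ : PhasePred) (i : ℕ) : Prop :=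
  0 ≤ A.thrU i ∧ A.thrU i ≤ (ψ i).thrVal

/-- The border threshold `thr̄ = max(1 − thr_u^1, 1 − thr_m^{1,k}/2)`. -/
noncomputable def Algo.borderThr (A : Algo) : ℝ :=
  max (1 - A.thrU 1) (1 - A.thrM 1 / 2)

/-- `ψ` is a decider: all rounds are solo-safe w.r.t. `ψ`. -/
def Algo.decider (A : Algo) (ψ : PhasePred) : Prop :=
  ∀ i, 1 ≤ i → i ≤ A.r → A.soloSafe ψ i

/-- `ψ` is a unifier. -/
def Algo.unifier (A : Algo) (ψ : PhasePred) : Prop :=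
  A.thrM 1 ≤ (ψ 1).thrVal ∧
  (A.thrU 1 ≤ (ψ 1).thrVal ∨ A.borderThr ≤ (ψ 1).thrVal) ∧
  ∃ i, 1 ≤ i ∧ i ≤ A.ir ∧ (ψ i).isEqualizer ∧
    (∀ j, 2 ≤ j → j ≤ i → ¬ A.preserving ψ j) ∧
    (∀ j, i < j → j ≤ A.ir → A.soloSafe ψ j)

/-- The algorithm is syntactically safe. -/
def Algo.syntSafe (A : Algo) : Prop :=
  A.hasMult 1 ∧
  (∀ i, 1 ≤ i → i ≤ A.r → A.hasUni i) ∧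
  (∀ q ∈ (A.rounds 1).mults, q.2 = Op.smor) ∧
  1 - A.thrU (A.ir + 1) ≤ A.thrM 1 / 2 ∧
  1 - A.thrU (A.ir + 1) ≤ A.thrU 1

/-- Assumption (A) relative to the global predicate `gl`. -/
def Algo.assumptionA (A : Algo) (gl : PhasePred) : Prop :=
  ∀ i, 1 ≤ i → i ≤ A.r →
    (∀ j, 1 ≤ j → j < i → ¬ A.preserving gl j) →
    (A.hasUni i → (gl i).thrVal ≤ A.thrU i) ∧
    (A.hasMult i → (gl i).thrVal ≤ A.thrM i)

/-- Proviso (P): the global predicate has no equalizer and round `ir+1` has no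
mult instruction. -/
def Algo.provisoP (A : Algo) (gl : PhasePred) : Prop :=
  (∀ i, 1 ≤ i → i ≤ A.r → ¬ (gl i).isEqualizer) ∧ ¬ A.hasMult (A.ir + 1)

/-- Removing all mult instructions of a round. -/
def Round.dropMults (R : Round) : Round :=
  { uniThr := R.uniThr, mults := [], wfU := R.wfU,
    wfM := by simp, sorted := by first | exact List.IsChain.nil | exact List.chain'_nil | constructor | simp [List.Chain'] }

/-- Removing all mult instructions of round `i` of an algorithm. -/
def Algo.dropMultsAt (A : Algo) (i : ℕ) : Algo :=
  { A with rounds := fun j => if j = i then (A.rounds j).dropMults else A.rounds j }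

/-! ### Communication predicates, executions, consensus -/

/-- A communication predicate `(G ψ̄) ∧ F(ψ^1 ∧ F(ψ^2 ∧ … ∧ F ψ^k))`:
a global phase predicate and sporadic phase predicates `ψ^1,…,ψ^k`. -/
structure CommPred where
  glob : PhasePred
  k : ℕ
  spor : ℕ → PhasePred

/-- Roundwise implication between phase predicates of an algorithm. -/
def predImplies (A : Algo) (ψ ψ' : PhasePred) : Prop :=
  ∀ i, 1 ≤ i → i ≤ A.r → (ψ i).implies (ψ' i)

/-- An execution of an algorithm respecting a communication predicate: an infinite
sequence of phase transitions under the global predicate, together with an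
increasing sequence of times at which the sporadic predicates hold. -/
structure Exec (A : Algo) (C : CommPred) (n : ℕ) where
  inp : ℕ → Fin n → Val
  dec : ℕ → Fin n → Val
  inp0 : ∀ p, inp 0 p ≠ none
  dec0 : ∀ p, dec 0 p = none
  step : ∀ s, phaseTrans A C.glob (inp s) (dec s) (inp (s + 1)) (dec (s + 1))
  sporTime : ℕ → ℕ
  mono : StrictMono sporTime
  sporStep : ∀ i, 1 ≤ i → i ≤ C.k →
    phaseTrans A (C.spor i) (inp (sporTime i)) (dec (sporTime i))
      (inp (sporTime i + 1)) (dec (sporTime i + 1))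

/-- Agreement: in every reachable state, any two non-`?` decision values coincide. -/
def Agreement (A : Algo) (C : CommPred) : Prop :=
  ∀ n, 0 < n → ∀ E : Exec A C n, ∀ s p q v w,
    E.dec s p = some v → E.dec s q = some w → v = w

/-- Termination: every execution reaches a state where all processes have decided. -/
def Termination (A : Algo) (C : CommPred) : Prop :=
  ∀ n, 0 < n → ∀ E : Exec A C n, ∃ s, ∀ p, E.dec s p ≠ none

/-- Solving consensus: agreement and termination. -/
def SolvesConsensus (A : Algo) (C : CommPred) : Prop :=
  Agreement A C ∧ Termination A C

/-! Every process may be given the same heard-of multiset, so `d ∈ fire_1(f, ψ̄)` iff some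
sub-multiset of `f` (with `k ≤ B = θn` copies of `b` and `m ≤ n - B` copies of `a`) updates to
`d`; by Assumption (A) the threshold of `ψ̄` never excludes such a multiset. The value `a` comes
either from uni with `m > thr_u·n`, or from smor with `0 < k ≤ m` and `k + m > thr_m·n`; the best
choice `m = n - B`, `k = min B (n - B)` gives exactly `θ < thr̄`. Symmetrically `b` needs
`k > thr_u·n`, or `0 < m < k` with `k + m > thr_m·n`, best achieved by `k = B`,
`m = min (B - 1) (n - B)`: the strict majority costs one process, hence "for large `n`". -/

lemma minThr_mem : ∀ {l : List ℝ}, l ≠ [] → minThr l ∈ l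
  | [], h => absurd rfl h
  | [_], _ => List.mem_singleton_self _
  | t :: u :: us, _ => by
    rcases min_choice t (minThr (u :: us)) with h | h
    · simp [minThr, h]
    · simp only [minThr, h]
      exact List.mem_cons_of_mem _ (minThr_mem (List.cons_ne_nil u us))

lemma minThr_le : ∀ {l : List ℝ} {x : ℝ}, x ∈ l → minThr l ≤ x
  | [_], _, hx => by simp_all [minThr]
  | t :: u :: us, x, hx => by
    rcases List.mem_cons.mp hx with rfl | hx
    · exact min_le_left _ _
    · exact (min_le_right _ _).trans (minThr_le hx)

lemma _root_.Multiset.card_filterMap_le {α β : Type*} (f : α → Option β) (s : Multiset α) :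
    (s.filterMap f).card ≤ s.card :=
  Quot.inductionOn s fun l => List.length_filterMap_le f l

lemma firstMult_of_forall_smor (n : ℕ) (S : Multiset ℕ) :
    ∀ l : List (ℝ × Op), (∀ q ∈ l, q.2 = Op.smor) →
      firstMult n S l =
        if 1 < S.toFinset.card ∧ ∃ q ∈ l, q.1 * n < S.card then msSmor S else none
  | [], _ => by simp [firstMult]
  | (t, op) :: l, hl => by
    have hop : op = Op.smor := hl (t, op) List.mem_cons_self
    rw [firstMult, firstMult_of_forall_smor n S l fun q hq => hl q (List.mem_cons_of_mem _ hq)]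
    subst hop
    by_cases h1 : 1 < S.toFinset.card <;> by_cases ht : t * n < S.card <;>
      simp [h1, ht, Op.apply]

namespace Round

variable (R : Round)

lemma uniThr_eq_some_thrU (hU : R.hasUni) : R.uniThr = some R.thrU := by
  obtain ⟨t, ht⟩ := Option.isSome_iff_exists.mp hU
  simp [Round.thrU, ht]

lemma thrU_mem_Ico (hU : R.hasUni) : R.thrU ∈ Set.Ico 0 1 :=
  R.wfU _ (R.uniThr_eq_some_thrU hU)

lemma thrM_mem_map_fst (hM : R.hasMult) : R.thrM ∈ R.mults.map Prod.fst :=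
  minThr_mem (by simpa [Round.hasMult] using hM)

lemma exists_mult_thr_mul_lt_iff (hM : R.hasMult) (n : ℕ) (c : ℝ) :
    (∃ q ∈ R.mults, q.1 * n < c) ↔ R.thrM * n < c := by
  constructor
  · rintro ⟨q, hq, hqc⟩
    exact (mul_le_mul_of_nonneg_right (minThr_le (List.mem_map_of_mem hq)) n.cast_nonneg).trans_lt
      hqc
  · intro hc
    obtain ⟨q, hq, hq1⟩ := List.mem_map.mp (R.thrM_mem_map_fst hM)
    exact ⟨q, hq, hq1 ▸ hc⟩

lemma thrM_mem_Ico (hM : R.hasMult) : R.thrM ∈ Set.Ico 0 1 := by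
  obtain ⟨q, hq, hq1⟩ := List.mem_map.mp (R.thrM_mem_map_fst hM)
  exact hq1 ▸ R.wfM q hq

lemma update_eq_ite (hU : R.hasUni) (hM : R.hasMult) (hsmor : ∀ q ∈ R.mults, q.2 = Op.smor)
    (n : ℕ) (H : Multiset Val) :
    R.update n H =
      if (H.filterMap id).toFinset.card = 1 ∧ R.thrU * n < (H.filterMap id).card then
        msMin (H.filterMap id)
      else if 1 < (H.filterMap id).toFinset.card ∧ R.thrM * n < (H.filterMap id).card then
        msSmor (H.filterMap id)
      else none := by
  simp [Round.update, R.uniThr_eq_some_thrU hU, firstMult_of_forall_smor n _ _ hsmor,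
    R.exists_mult_thr_mul_lt_iff hM]

lemma min_thr_mul_lt_card_of_update_eq_some (hU : R.hasUni) (hM : R.hasMult)
    (hsmor : ∀ q ∈ R.mults, q.2 = Op.smor) {n : ℕ} {H : Multiset Val} {d : ℕ}
    (h : R.update n H = some d) : min R.thrU R.thrM * n < H.card := by
  have hcard : ((H.filterMap id).card : ℝ) ≤ H.card := by
    exact_mod_cast Multiset.card_filterMap_le id H
  rw [R.update_eq_ite hU hM hsmor] at h
  split_ifs at h with h1 h2
  · exact ((mul_le_mul_of_nonneg_right (min_le_left _ _) n.cast_nonneg).trans_lt h1.2).trans_le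
      hcard
  · exact ((mul_le_mul_of_nonneg_right (min_le_right _ _) n.cast_nonneg).trans_lt h2.2).trans_le
      hcard

end Round

lemma fire_iff_exists_update (R : Round) (φ : RoundPred) {n : ℕ} (hn : 0 < n) (f : Fin n → Val)
    (d : Val) :
    fire R φ f d ↔
      ∃ H ≤ msetOf f, (∀ t ∈ φ.thr, t * n < (H.card : ℝ)) ∧ R.update n H = d := by
  constructor
  · rintro ⟨f', ⟨Hs, hle, hsat, hupd⟩, p, rfl⟩
    exact ⟨Hs p, hle p, fun t ht => hsat.2 t ht p, (hupd p).symm⟩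
  · rintro ⟨H, hle, hthr, hupd⟩
    exact ⟨fun _ => R.update n H,
      ⟨fun _ => H, fun _ => hle, ⟨fun _ _ _ => rfl, fun t ht _ => hthr t ht⟩, fun _ => rfl⟩,
      ⟨0, hn⟩, hupd⟩

lemma fire_some_iff_exists_update (R : Round) (φ : RoundPred) (hU : R.hasUni) (hM : R.hasMult)
    (hsmor : ∀ q ∈ R.mults, q.2 = Op.smor) (hφ : φ.thrVal ≤ min R.thrU R.thrM)
    {n : ℕ} (hn : 0 < n) (f : Fin n → Val) (d : ℕ) :
    fire R φ f (some d) ↔ ∃ H ≤ msetOf f, R.update n H = some d := by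
  rw [fire_iff_exists_update R φ hn]
  refine exists_congr fun H => and_congr_right fun _ => and_iff_right_of_imp fun hH t ht => ?_
  have hval : φ.thrVal = t := by simp [RoundPred.thrVal, Option.mem_def.mp ht]
  exact hval ▸ (mul_le_mul_of_nonneg_right hφ n.cast_nonneg).trans_lt
    (R.min_thr_mul_lt_card_of_update_eq_some hU hM hsmor hH)

lemma bVal_ne_aVal : bVal ≠ aVal := one_ne_zero

def abMset (k m : ℕ) : Multiset Val :=
  Multiset.replicate k (some bVal) + Multiset.replicate m (some aVal)

lemma count_abMset (k m : ℕ) (x : Val) :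
    (abMset k m).count x = (if x = some bVal then k else 0) + (if x = some aVal then m else 0) := by
  simp [abMset, Multiset.count_replicate, eq_comm]

lemma le_abMset_iff {H : Multiset Val} {k m : ℕ} :
    H ≤ abMset k m ↔ ∃ k' ≤ k, ∃ m' ≤ m, H = abMset k' m' := by
  constructor
  · intro hle
    have hcount := Multiset.le_iff_count.mp hle
    refine ⟨H.count (some bVal), by simpa [count_abMset, bVal_ne_aVal] using hcount (some bVal),
      H.count (some aVal), by simpa [count_abMset, bVal_ne_aVal.symm] using hcount (some aVal), ?_⟩
    ext x
    by_cases hb : x = some bVal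
    · simp [count_abMset, hb, bVal_ne_aVal]
    by_cases ha : x = some aVal
    · simp [count_abMset, ha, bVal_ne_aVal.symm]
    simpa [count_abMset, ha, hb] using hcount x
  · rintro ⟨k', hk, m', hm, rfl⟩
    exact add_le_add (Multiset.replicate_le_replicate _ |>.mpr hk)
      (Multiset.replicate_le_replicate _ |>.mpr hm)

lemma exists_le_abMset_iff {P : Multiset Val → Prop} {k m : ℕ} :
    (∃ H ≤ abMset k m, P H) ↔ ∃ k' ≤ k, ∃ m' ≤ m, P (abMset k' m') := by
  simp only [le_abMset_iff]
  aesop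

lemma count_msetOf {n : ℕ} (f : Fin n → Val) (x : Val) :
    (msetOf f).count x = (Finset.univ.filter fun p => f p = x).card := by
  rw [msetOf, Multiset.count_map, Finset.card_def, Finset.filter_val]
  simp only [eq_comm]

lemma msetOf_eq_abMset {n : ℕ} {f : Fin n → Val} (hf : ∀ p, f p = some aVal ∨ f p = some bVal) :
    msetOf f = abMset (Finset.univ.filter fun p => f p = some bVal).card
      (n - (Finset.univ.filter fun p => f p = some bVal).card) := by
  ext x
  rw [count_msetOf, count_abMset]
  by_cases hb : x = some bVal
  · simp [hb, bVal_ne_aVal]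
  by_cases ha : x = some aVal
  · subst ha
    have hsplit := Finset.card_filter_add_card_filter_not (s := Finset.univ)
      (fun p => f p = some bVal)
    have hab : ∀ p, ¬ f p = some bVal ↔ f p = some aVal := fun p => by
      rcases hf p with h | h <;> simp [h, bVal_ne_aVal, bVal_ne_aVal.symm]
    simp only [hab, Finset.card_univ, Fintype.card_fin] at hsplit
    simp only [Option.some.injEq, bVal_ne_aVal.symm, ↓reduceIte, zero_add]
    omega
  · simp only [hb, ha, if_false, add_zero, Finset.card_eq_zero, Finset.filter_eq_empty_iff]
    rintro p - rfl
    rcases hf p with h | h <;> simp_all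

lemma filterMap_id_replicate_some (m v : ℕ) :
    (Multiset.replicate m (some v)).filterMap id = Multiset.replicate m v := by
  rw [← Multiset.map_replicate, Multiset.filterMap_map]
  exact Multiset.filterMap_some _

lemma msMin_replicate {m : ℕ} (hm : m ≠ 0) (v : ℕ) : msMin (Multiset.replicate m v) = some v := by
  simp [msMin, Multiset.toFinset_replicate, hm]

lemma msSmor_replicate_add_replicate {k m : ℕ} (hk : k ≠ 0) (hm : m ≠ 0) :
    msSmor (Multiset.replicate k bVal + Multiset.replicate m aVal) =
      some (if m < k then bVal else aVal) := by
  simp only [msSmor, bVal, aVal, Multiset.toFinset_add, Multiset.toFinset_replicate, hk, hm,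
    ↓reduceIte, Finset.singleton_union, Finset.mem_insert, Finset.mem_singleton, Multiset.count_add,
    Multiset.count_replicate, forall_eq_or_imp, zero_ne_one, one_ne_zero, add_zero, zero_add,
    forall_eq, Finset.filter_insert, le_refl, true_and, Finset.filter_singleton, and_true,
    Option.dite_none_right_eq_some, Option.some.injEq]
  rcases lt_trichotomy m k with h | rfl | h
  · simp [h.le, Nat.not_le.mpr h]
  · simp
  · simp [h.le, Nat.not_le.mpr h, h.not_gt]

namespace Round

variable (R : Round)

lemma update_replicate (hU : R.hasUni) (hM : R.hasMult) (hsmor : ∀ q ∈ R.mults, q.2 = Op.smor)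
    (n m v : ℕ) :
    R.update n (Multiset.replicate m (some v)) = if R.thrU * n < m then some v else none := by
  rw [R.update_eq_ite hU hM hsmor, filterMap_id_replicate_some]
  rcases eq_or_ne m 0 with rfl | hm
  · have : ¬ R.thrU * n < 0 := not_lt.mpr (mul_nonneg (R.thrU_mem_Ico hU).1 n.cast_nonneg)
    simp [this]
  · simp [Multiset.toFinset_replicate, hm, msMin_replicate hm]

lemma update_abMset_of_ne_zero (hU : R.hasUni) (hM : R.hasMult)
    (hsmor : ∀ q ∈ R.mults, q.2 = Op.smor) (n : ℕ) {k m : ℕ} (hk : k ≠ 0) (hm : m ≠ 0) :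
    R.update n (abMset k m) =
      if R.thrM * n < k + m then some (if m < k then bVal else aVal) else none := by
  have hfm : (abMset k m).filterMap id =
      Multiset.replicate k bVal + Multiset.replicate m aVal := by
    simp only [abMset, Multiset.filterMap_add, filterMap_id_replicate_some]
  have hcard : (Multiset.replicate k bVal + Multiset.replicate m aVal).toFinset.card = 2 := by
    simp [Multiset.toFinset_add, Multiset.toFinset_replicate, hk, hm, aVal, bVal]
  rw [R.update_eq_ite hU hM hsmor, hfm, hcard, msSmor_replicate_add_replicate hk hm]
  simp

lemma update_abMset_eq_some_aVal_iff (hU : R.hasUni) (hM : R.hasMult)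
    (hsmor : ∀ q ∈ R.mults, q.2 = Op.smor) (n k m : ℕ) :
    R.update n (abMset k m) = some aVal ↔
      (k = 0 ∧ R.thrU * n < m) ∨ (0 < k ∧ k ≤ m ∧ R.thrM * n < k + m) := by
  rcases eq_or_ne k 0 with rfl | hk
  · simp [abMset, R.update_replicate hU hM hsmor]
  rcases eq_or_ne m 0 with rfl | hm
  · simp [abMset, R.update_replicate hU hM hsmor, bVal_ne_aVal, hk]
  rw [R.update_abMset_of_ne_zero hU hM hsmor n hk hm]
  by_cases hmk : m < k
  · simp [hmk, Nat.not_le.mpr hmk, bVal_ne_aVal, hk]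
  · simp [hmk, Nat.not_lt.mp hmk, Nat.pos_of_ne_zero hk, hk]

lemma update_abMset_eq_some_bVal_iff (hU : R.hasUni) (hM : R.hasMult)
    (hsmor : ∀ q ∈ R.mults, q.2 = Op.smor) (n k m : ℕ) :
    R.update n (abMset k m) = some bVal ↔
      (m = 0 ∧ R.thrU * n < k) ∨ (0 < m ∧ m < k ∧ R.thrM * n < k + m) := by
  rcases eq_or_ne m 0 with rfl | hm
  · simp [abMset, R.update_replicate hU hM hsmor]
  rcases eq_or_ne k 0 with rfl | hk
  · simp [abMset, R.update_replicate hU hM hsmor, bVal_ne_aVal.symm, hm]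
  rw [R.update_abMset_of_ne_zero hU hM hsmor n hk hm]
  by_cases hmk : m < k <;> simp [hmk, hm, bVal_ne_aVal.symm, Nat.pos_of_ne_zero hm]

end Round

section Counting

variable {n B : ℕ} {θ u M : ℝ}

lemma exists_counts_firing_a_iff (hn : 0 < n) (hBn : B ≤ n) (hB : (B : ℝ) = θ * n)
    (hu1 : u < 1) (hM0 : 0 ≤ M) (hM1 : M < 1) :
    (∃ k ≤ B, ∃ m ≤ n - B, (k = 0 ∧ u * n < m) ∨ (0 < k ∧ k ≤ m ∧ M * n < k + m)) ↔
      θ < max (1 - u) (1 - M / 2) := by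
  have hnR : (0 : ℝ) < n := Nat.cast_pos.mpr hn
  have hA : ((n - B : ℕ) : ℝ) = (1 - θ) * n := by rw [Nat.cast_sub hBn, hB]; ring
  constructor
  · rintro ⟨k, -, m, hm, ⟨-, hum⟩ | ⟨-, hkm, hMkm⟩⟩
    all_goals have hm' : (m : ℝ) ≤ (1 - θ) * n := hA ▸ Nat.cast_le.mpr hm
    · have : u < 1 - θ := lt_of_mul_lt_mul_right (hum.trans_le hm') hnR.le
      exact lt_max_of_lt_left (by linarith)
    · have hkm' : (k : ℝ) ≤ m := Nat.cast_le.mpr hkm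
      have : M < 2 * (1 - θ) := lt_of_mul_lt_mul_right (by linarith) hnR.le
      exact lt_max_of_lt_right (by linarith)
  · intro h
    by_cases hθu : θ < 1 - u
    · exact ⟨0, B.zero_le, n - B, le_rfl, Or.inl ⟨rfl, hA ▸ by nlinarith⟩⟩
    have hθM : θ < 1 - M / 2 := (lt_max_iff.mp h).resolve_left hθu
    have hBpos : 0 < B := Nat.cast_pos.mp (by rw [hB]; nlinarith)
    have hBlt : B < n := Nat.cast_lt.mp (by rw [hB]; nlinarith)
    rcases le_total B (n - B) with hle | hle
    · refine ⟨B, le_rfl, n - B, le_rfl, Or.inr ⟨hBpos, hle, ?_⟩⟩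
      rw [← Nat.cast_add, Nat.add_sub_cancel' hBn]
      nlinarith
    · refine ⟨n - B, hle, n - B, le_rfl, Or.inr ⟨by omega, le_rfl, ?_⟩⟩
      rw [hA]
      nlinarith

lemma exists_counts_firing_b_iff (hn : 0 < n) (hBn : B ≤ n) (hB : (B : ℝ) = θ * n)
    (hu1 : u < 1) (hM0 : 0 ≤ M) (hM1 : M < 1) (hmargin : M / 2 < θ → M * n + 2 < 2 * θ * n) :
    (∃ k ≤ B, ∃ m ≤ n - B, (m = 0 ∧ u * n < k) ∨ (0 < m ∧ m < k ∧ M * n < k + m)) ↔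
      1 - max (1 - u) (1 - M / 2) < θ := by
  have hnR : (0 : ℝ) < n := Nat.cast_pos.mpr hn
  constructor
  · rintro ⟨k, hk, m, -, ⟨-, huk⟩ | ⟨-, hmk, hMkm⟩⟩
    all_goals have hk' : (k : ℝ) ≤ θ * n := hB ▸ Nat.cast_le.mpr hk
    · have : u < θ := lt_of_mul_lt_mul_right (huk.trans_le hk') hnR.le
      linarith [le_max_left (1 - u) (1 - M / 2)]
    · have hmk' : (m : ℝ) < k := Nat.cast_lt.mpr hmk
      have : M < 2 * θ := lt_of_mul_lt_mul_right (by linarith) hnR.le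
      linarith [le_max_right (1 - u) (1 - M / 2)]
  · intro h
    by_cases hθu : u < θ
    · exact ⟨B, le_rfl, 0, (n - B).zero_le, Or.inl ⟨rfl, hB ▸ by nlinarith⟩⟩
    have hθM : M / 2 < θ := by
      rw [sub_lt_comm, lt_max_iff] at h
      exact h.elim (fun h => absurd (by linarith) hθu) (by intro; linarith)
    have h2B : M * n + 2 < 2 * B := hB ▸ (hmargin hθM).trans_eq (by ring)
    have hBlt : B < n := Nat.cast_lt.mp (by rw [hB]; nlinarith)
    rcases le_or_gt (2 * B) n with hle | hlt
    · have hB2 : 2 ≤ B := by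
        have : (1 : ℝ) < B := by nlinarith
        exact_mod_cast this
      refine ⟨B, le_rfl, B - 1, by omega, Or.inr ⟨by omega, by omega, ?_⟩⟩
      push_cast [Nat.cast_sub (by omega : 1 ≤ B)]
      linarith
    · refine ⟨B, le_rfl, n - B, le_rfl, Or.inr ⟨by omega, by omega, ?_⟩⟩
      rw [← Nat.cast_add, Nat.add_sub_cancel' hBn]
      nlinarith

end Counting

lemma eventually_mul_add_two_lt_two_mul (θ M : ℝ) :
    ∀ᶠ n : ℕ in Filter.atTop, M / 2 < θ → M * n + 2 < 2 * θ * n := by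
  by_cases h : M / 2 < θ
  · filter_upwards [(tendsto_natCast_atTop_atTop.const_mul_atTop
      (show 0 < 2 * θ - M by linarith)).eventually_gt_atTop 2] with n hn _
    linarith
  · exact Filter.Eventually.of_forall fun _ h' => absurd h' h

/-- Lemma 13 and its corollary.  For a syntactically safe
core-language algorithm satisfying Assumption (A), under the global predicate
`gl`: `a ∈ fire_1(bias(θ), gl)` iff `θ < thr̄`, and `b ∈ fire_1(bias(θ), gl)`
iff `θ > 1 − thr̄` (for all sufficiently large `n`). -/
theorem fire_first_round_iff_border (A : Algo) (gl : PhasePred)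
    (hs : A.syntSafe) (hA : A.assumptionA gl) :
    ∀ θ : ℝ, ∃ n₀ : ℕ, ∀ n : ℕ, n₀ ≤ n → ∀ f : Fin n → Val, isBias θ f →
      (fire (A.rounds 1) (gl 1) f (some aVal) ↔ θ < A.borderThr) ∧
      (fire (A.rounds 1) (gl 1) f (some bVal) ↔ 1 - A.borderThr < θ) := by
  set R := A.rounds 1
  have hr : 1 ≤ A.r := by have := A.two_le_r; omega
  have hU : R.hasUni := hs.2.1 1 le_rfl hr
  have hM : R.hasMult := hs.1
  have hsmor := hs.2.2.1
  obtain ⟨hglU, hglM⟩ := hA 1 le_rfl hr fun j hj hj' => absurd hj' (by omega)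
  have hgl : (gl 1).thrVal ≤ min R.thrU R.thrM := le_min (hglU hU) (hglM hM)
  intro θ
  rw [← Filter.eventually_atTop]
  filter_upwards [Filter.eventually_ge_atTop 1, eventually_mul_add_two_lt_two_mul θ R.thrM]
    with n hn hmargin f hf
  have hBn : (Finset.univ.filter fun p => f p = some bVal).card ≤ n := by
    simpa using Finset.card_filter_le Finset.univ fun p => f p = some bVal
  simp only [fire_some_iff_exists_update R _ hU hM hsmor hgl hn, msetOf_eq_abMset hf.1,
    exists_le_abMset_iff, R.update_abMset_eq_some_aVal_iff hU hM hsmor,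
    R.update_abMset_eq_some_bVal_iff hU hM hsmor]
  obtain ⟨hM0, hM1⟩ := R.thrM_mem_Ico hM
  exact ⟨exists_counts_firing_a_iff hn hBn hf.2 (R.thrU_mem_Ico hU).2 hM0 hM1,
    exists_counts_firing_b_iff hn hBn hf.2 (R.thrU_mem_Ico hU).2 hM0 hM1 hmargin⟩

end HO
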